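/- arXiv:1804.03079 — 2 statements merged into one kernel-verified Lean document; each statement's English description precedes it below -/
import Mathlib

section
/- Let H ∈ ℂ^{N×S} have orthogonal columns h_1,…,h_S with ‖h_k‖² = γ_k. For each k, with w_k = h_k/‖h_k‖², the SINR expression αρ‖h_k‖⁴ / (ρ(1−α) h_k^H diag(HH^H) h_k + ‖h_k‖²) satisfies: it is upper bounded by αρ‖h_k‖⁴ / (ρ(1−α) Σ_{i∈L_k} |h_{i,k}|⁴ + γ_k), with equality iff the supports of the columns are pairwise disjoint (i.e., h_{i,u} = 0 for all u ≠ k and i in the support of h_k). -/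
open Finset

theorem stmt4 (N S : ℕ) (α ρ : ℝ) (hα0 : 0 < α) (hα1 : α < 1) (hρ : 0 < ρ)
    (H : Matrix (Fin N) (Fin S) ℂ) (γ : Fin S → ℝ) (hγ : ∀ k, 0 < γ k)
    (hnorm : ∀ k, ∑ i, ‖H i k‖^2 = γ k)
    (horth : ∀ k l, k ≠ l → ∑ i, (starRingEnd ℂ) (H i k) * H i l = 0) (k : Fin S) :
    α * ρ * (γ k)^2 /
        (ρ * (1 - α) * (∑ i, ‖H i k‖^2 * ∑ u, ‖H i u‖^2) + γ k) ≤
      α * ρ * (γ k)^2 / (ρ * (1 - α) * (∑ i, ‖H i k‖^4) + γ k) ∧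
    (α * ρ * (γ k)^2 /
        (ρ * (1 - α) * (∑ i, ‖H i k‖^2 * ∑ u, ‖H i u‖^2) + γ k) =
      α * ρ * (γ k)^2 / (ρ * (1 - α) * (∑ i, ‖H i k‖^4) + γ k) ↔
        ∀ u, u ≠ k → ∀ i, H i k ≠ 0 → H i u = 0) := by
  have hγk := hγ k
  have hc : 0 < α * ρ * (γ k)^2 := by positivity
  have hρα : 0 < ρ * (1 - α) := by
    have : 0 < 1 - α := by linarith
    positivity
  set E := ∑ i, ‖H i k‖^2 * ∑ u ∈ univ.erase k, ‖H i u‖^2 with hEdef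
  have hE0 : 0 ≤ E := by
    apply Finset.sum_nonneg
    intro i _
    apply mul_nonneg (by positivity)
    exact Finset.sum_nonneg fun u _ => by positivity
  have hsplit : (∑ i, ‖H i k‖^2 * ∑ u, ‖H i u‖^2)
      = (∑ i, ‖H i k‖^4) + E := by
    rw [hEdef, ← Finset.sum_add_distrib]
    apply Finset.sum_congr rfl
    intro i _
    rw [← Finset.add_sum_erase _ _ (Finset.mem_univ k)]
    ring
  have hD2pos : 0 < ρ * (1 - α) * (∑ i, ‖H i k‖^4) + γ k := by
    have h1 : 0 ≤ ∑ i, ‖H i k‖^4 :=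
      Finset.sum_nonneg fun i _ => by positivity
    have := hγ k
    nlinarith
  have hD1pos : 0 < ρ * (1 - α) * (∑ i, ‖H i k‖^2 * ∑ u, ‖H i u‖^2) + γ k := by
    rw [hsplit]
    nlinarith
  have hle : ρ * (1 - α) * (∑ i, ‖H i k‖^4) + γ k ≤
      ρ * (1 - α) * (∑ i, ‖H i k‖^2 * ∑ u, ‖H i u‖^2) + γ k := by
    rw [hsplit]; nlinarith
  constructor
  · exact div_le_div_of_nonneg_left hc.le hD2pos hle
  · constructor
    · intro heq
      have hdeq : ρ * (1 - α) * (∑ i, ‖H i k‖^2 * ∑ u, ‖H i u‖^2) + γ k =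
          ρ * (1 - α) * (∑ i, ‖H i k‖^4) + γ k := by
        have h := (div_eq_div_iff hD1pos.ne' hD2pos.ne').mp heq
        have := mul_left_cancel₀ hc.ne' h
        linarith
      have hEzero : E = 0 := by
        rw [hsplit] at hdeq
        have : ρ * (1 - α) * E = 0 := by nlinarith
        exact (mul_eq_zero.mp this).resolve_left hρα.ne'
      have hterm := (Finset.sum_eq_zero_iff_of_nonneg
        (fun i _ => mul_nonneg (by positivity)
          (Finset.sum_nonneg fun u _ => by positivity))).mp hEzero
      intro u hu i hik
      have hi := hterm i (Finset.mem_univ i)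
      have hik2 : ‖H i k‖^2 ≠ 0 := by
        simpa using hik
      have hsum : ∑ u ∈ univ.erase k, ‖H i u‖^2 = 0 :=
        (mul_eq_zero.mp hi).resolve_left hik2
      have := (Finset.sum_eq_zero_iff_of_nonneg
        (fun u _ => by positivity)).mp hsum u (Finset.mem_erase.mpr ⟨hu, Finset.mem_univ u⟩)
      simpa using this
    · intro h
      have hEzero : E = 0 := by
        apply Finset.sum_eq_zero
        intro i _
        rcases eq_or_ne (H i k) 0 with h0 | h0
        · simp [h0]
        · have : ∑ u ∈ univ.erase k, ‖H i u‖^2 = 0 := by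
            apply Finset.sum_eq_zero
            intro u hu
            rw [h u (Finset.mem_erase.mp hu).1 i h0]
            simp
          rw [this, mul_zero]
      rw [hsplit, hEzero, add_zero]
end

section
/- For random variables X ≥ 0 and Y ≥ 0 with X, Y independent, E[ln(1 + X/(Y+1))] = ∫_0^∞ (e^{-z}/z)(1 − E[e^{-zX}]) E[e^{-zY}] dz. -/
/-!
Frullani's integral for `exp` gives, for `a ≥ 0` and `b + 1 > 0`,
`log (1 + a / (b + 1)) = ∫₀^∞ (e^{-(b+1)z} - e^{-(a+b+1)z}) / z dz
  = ∫₀^∞ (e^{-z} / z) (1 - e^{-za}) e^{-zb} dz`, with a nonnegative integrand.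
Substituting `a = X`, `b = Y`, Tonelli's theorem exchanges the expectation with the `dz`-integral,
and independence factors `E[(1 - e^{-zX}) e^{-zY}]` into `(1 - E[e^{-zX}]) E[e^{-zY}]`.
-/

open MeasureTheory ProbabilityTheory Real Set Filter

lemma exp_neg_mul_le_one {z x : ℝ} (hz : 0 ≤ z) (hx : 0 ≤ x) : exp (-z * x) ≤ 1 :=
  exp_le_one_iff.2 (by nlinarith)

lemma integrableOn_Ioi_inv_mul_exp_neg_sub {c d : ℝ} (hc : 0 < c) (hcd : c ≤ d) :
    IntegrableOn (fun x => x⁻¹ * (exp (-(c * x)) - exp (-(d * x)))) (Ioi 0) := by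
  refine Integrable.mono' ((exp_neg_integrableOn_Ioi 0 hc).const_mul (d - c)) (by fun_prop)
    (ae_restrict_of_forall_mem measurableSet_Ioi fun x (hx : 0 < x) => ?_)
  have hsub : exp (-(c * x)) - exp (-(d * x)) = exp (-c * x) * (1 - exp (-((d - c) * x))) := by
    rw [mul_sub, mul_one, ← exp_add]
    ring_nf
  have hle : 1 - exp (-((d - c) * x)) ≤ (d - c) * x := by
    linarith [add_one_le_exp (-((d - c) * x))]
  have hnonneg : 0 ≤ 1 - exp (-((d - c) * x)) := sub_nonneg.2 (exp_le_one_iff.2 (by nlinarith))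
  rw [norm_mul, norm_inv, norm_of_nonneg hx.le, hsub,
    norm_of_nonneg (mul_nonneg (exp_pos _).le hnonneg), inv_mul_le_iff₀ hx]
  calc exp (-c * x) * (1 - exp (-((d - c) * x))) ≤ exp (-c * x) * ((d - c) * x) :=
        mul_le_mul_of_nonneg_left hle (exp_pos _).le
    _ = x * ((d - c) * exp (-c * x)) := by ring

lemma integral_Ioi_inv_mul_exp_neg_sub {c d : ℝ} (hc : 0 < c) (hcd : c ≤ d) :
    ∫ x in Ioi 0, x⁻¹ * (exp (-(c * x)) - exp (-(d * x))) = log (d / c) := by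
  have hcont : Continuous fun x : ℝ => exp (-x) := by fun_prop
  simpa using Frullani.integral_Ioi_eq (L := 1) (R := 0)
    (hcont.locallyIntegrable.locallyIntegrableOn _) hc (hc.trans_le hcd)
    (by simpa using (hcont.tendsto 0).mono_left nhdsWithin_le_nhds)
    tendsto_exp_neg_atTop_nhds_zero (integrableOn_Ioi_inv_mul_exp_neg_sub hc hcd)

lemma exp_neg_div_mul_one_sub_mul_nonneg {z a b : ℝ} (hz : 0 ≤ z) (ha : 0 ≤ a) :
    0 ≤ exp (-z) / z * (1 - exp (-z * a)) * exp (-z * b) := by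
  have := exp_neg_mul_le_one hz ha
  positivity

lemma lintegral_Ioi_exp_neg_div_mul_one_sub_mul {a b : ℝ} (ha : 0 ≤ a) (hb : 0 < b + 1) :
    ∫⁻ z in Ioi 0, ENNReal.ofReal (exp (-z) / z * (1 - exp (-z * a)) * exp (-z * b)) =
      ENNReal.ofReal (log (1 + a / (b + 1))) := by
  have hcd : b + 1 ≤ a + (b + 1) := le_add_of_nonneg_left ha
  have hfrullani : EqOn (fun z => exp (-z) / z * (1 - exp (-z * a)) * exp (-z * b))
      (fun z => z⁻¹ * (exp (-((b + 1) * z)) - exp (-((a + (b + 1)) * z)))) (Ioi 0) := by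
    intro z _
    dsimp only
    rw [show -((b + 1) * z) = -z + -z * b by ring,
      show -((a + (b + 1)) * z) = -z + -z * a + -z * b by ring, exp_add, exp_add, exp_add]
    ring
  rw [← ofReal_integral_eq_lintegral_ofReal
      ((integrableOn_Ioi_inv_mul_exp_neg_sub hb hcd).congr_fun hfrullani.symm measurableSet_Ioi)
      (ae_restrict_of_forall_mem measurableSet_Ioi fun z (hz : 0 < z) =>
        exp_neg_div_mul_one_sub_mul_nonneg hz.le ha),
    setIntegral_congr_fun measurableSet_Ioi hfrullani, integral_Ioi_inv_mul_exp_neg_sub hb hcd]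
  congr 2
  field_simp
  ring

lemma toReal_lintegral_lintegral_ofReal {α β : Type*} [MeasurableSpace α] [MeasurableSpace β]
    {μ : Measure α} {ν : Measure β} [SFinite μ] [SFinite ν] {f : α → β → ℝ}
    (hf : Measurable (Function.uncurry f)) (hf0 : ∀ᵐ y ∂ν, 0 ≤ᵐ[μ] fun x => f x y)
    (hfi : ∀ᵐ y ∂ν, Integrable (fun x => f x y) μ) :
    (∫⁻ x, ∫⁻ y, ENNReal.ofReal (f x y) ∂ν ∂μ).toReal = ∫ y, ∫ x, f x y ∂μ ∂ν := by
  have hF : Measurable (Function.uncurry fun x y => ENNReal.ofReal (f x y)) :=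
    ENNReal.measurable_ofReal.comp hf
  rw [lintegral_lintegral_swap hF.aemeasurable, ← integral_toReal hF.lintegral_prod_left.aemeasurable
    (hfi.mono fun y hy => hy.lintegral_lt_top)]
  refine integral_congr_ae ?_
  filter_upwards [hf0, hfi] with y hy0 hyi
  exact (integral_eq_lintegral_of_nonneg_ae hy0 hyi.aestronglyMeasurable).symm

section

variable {Ω : Type*} [MeasurableSpace Ω] {μ : Measure Ω} [IsProbabilityMeasure μ] {X Y : Ω → ℝ}

lemma ProbabilityTheory.IndepFun.integral_one_sub_exp_neg_mul_mul_exp_neg_mul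
    (hind : IndepFun X Y μ) (hX : Measurable X) (hY : Measurable Y) (hX0 : ∀ ω, 0 ≤ X ω)
    {z : ℝ} (hz : 0 ≤ z) :
    ∫ ω, (1 - exp (-z * X ω)) * exp (-z * Y ω) ∂μ =
      (1 - ∫ ω, exp (-z * X ω) ∂μ) * ∫ ω, exp (-z * Y ω) ∂μ := by
  have hXint : Integrable (fun ω => exp (-z * X ω)) μ :=
    Integrable.of_bound (by fun_prop) 1 (Eventually.of_forall fun ω => by
      rw [norm_of_nonneg (exp_pos _).le]
      exact exp_neg_mul_le_one hz (hX0 ω))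
  have hfactor := (hind.comp (φ := fun x => 1 - exp (-z * x)) (ψ := fun y => exp (-z * y))
    (by fun_prop) (by fun_prop)).integral_fun_mul_eq_mul_integral (by fun_prop) (by fun_prop)
  simp only [Function.comp_apply] at hfactor
  rw [hfactor, integral_sub (integrable_const 1) hXint, integral_const, probReal_univ, one_smul]

lemma integrable_exp_neg_div_mul_one_sub_mul (hX : Measurable X) (hY : Measurable Y)
    (hX0 : ∀ ω, 0 ≤ X ω) (hY0 : ∀ ω, 0 ≤ Y ω) {z : ℝ} (hz : 0 < z) :
    Integrable (fun ω => exp (-z) / z * (1 - exp (-z * X ω)) * exp (-z * Y ω)) μ := by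
  refine Integrable.of_bound (by fun_prop) (exp (-z) / z) (Eventually.of_forall fun ω => ?_)
  have hY1 := exp_neg_mul_le_one hz.le (hY0 ω)
  have hX1 := (exp_pos (-z * X ω)).le
  rw [norm_of_nonneg (exp_neg_div_mul_one_sub_mul_nonneg hz.le (hX0 ω))]
  calc exp (-z) / z * (1 - exp (-z * X ω)) * exp (-z * Y ω) ≤ exp (-z) / z * 1 * 1 := by
        gcongr; linarith
    _ = exp (-z) / z := by ring

end

theorem stmt9_general {Ω : Type*} [MeasurableSpace Ω] (μ : Measure Ω) [IsProbabilityMeasure μ]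
    (X Y : Ω → ℝ) (hX : Measurable X) (hY : Measurable Y)
    (hX0 : ∀ ω, 0 ≤ X ω) (hY0 : ∀ ω, 0 ≤ Y ω)
    (hind : IndepFun X Y μ) :
    (∫ ω, Real.log (1 + X ω / (Y ω + 1)) ∂μ) =
      ∫ z in Set.Ioi (0:ℝ),
        (Real.exp (-z) / z) * (1 - ∫ ω, Real.exp (-z * X ω) ∂μ) *
          ∫ ω, Real.exp (-z * Y ω) ∂μ := by
  set g : Ω → ℝ → ℝ := fun ω z => exp (-z) / z * (1 - exp (-z * X ω)) * exp (-z * Y ω)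
  have hlog : ∀ ω, ∫⁻ z in Ioi 0, ENNReal.ofReal (g ω z) =
      ENNReal.ofReal (log (1 + X ω / (Y ω + 1))) := fun ω =>
    lintegral_Ioi_exp_neg_div_mul_one_sub_mul (hX0 ω) (by linarith [hY0 ω])
  calc ∫ ω, log (1 + X ω / (Y ω + 1)) ∂μ
      = (∫⁻ ω, ∫⁻ z in Ioi 0, ENNReal.ofReal (g ω z) ∂volume ∂μ).toReal := by
        simp_rw [hlog]
        exact integral_eq_lintegral_of_nonneg_ae (Eventually.of_forall fun ω =>
          log_nonneg (le_add_of_nonneg_right (div_nonneg (hX0 ω) (by linarith [hY0 ω]))))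
          (by fun_prop : Measurable fun ω => log (1 + X ω / (Y ω + 1))).aestronglyMeasurable
    _ = ∫ z in Ioi 0, ∫ ω, g ω z ∂μ :=
        toReal_lintegral_lintegral_ofReal (by fun_prop)
          (ae_restrict_of_forall_mem measurableSet_Ioi fun z (hz : 0 < z) =>
            Eventually.of_forall fun ω => exp_neg_div_mul_one_sub_mul_nonneg hz.le (hX0 ω))
          (ae_restrict_of_forall_mem measurableSet_Ioi fun z hz =>
            integrable_exp_neg_div_mul_one_sub_mul hX hY hX0 hY0 hz)
    _ = _ := setIntegral_congr_fun measurableSet_Ioi fun z (hz : 0 < z) => by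
        simp only [g, mul_assoc, integral_const_mul]
        rw [hind.integral_one_sub_exp_neg_mul_mul_exp_neg_mul hX hY hX0 hz.le]

theorem stmt9 {Ω : Type*} [MeasurableSpace Ω] (μ : Measure Ω) [IsProbabilityMeasure μ]
    (X Y : Ω → ℝ) (hX : Measurable X) (hY : Measurable Y)
    (hX0 : ∀ ω, 0 ≤ X ω) (hY0 : ∀ ω, 0 ≤ Y ω)
    (hind : IndepFun X Y μ)
    (hint : Integrable (fun ω => Real.log (1 + X ω / (Y ω + 1))) μ) :
    (∫ ω, Real.log (1 + X ω / (Y ω + 1)) ∂μ) =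
      ∫ z in Set.Ioi (0:ℝ),
        (Real.exp (-z) / z) * (1 - ∫ ω, Real.exp (-z * X ω) ∂μ) *
          ∫ ω, Real.exp (-z * Y ω) ∂μ :=
  stmt9_general μ X Y hX hY hX0 hY0 hind
end
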